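/- Let B, C ⊆ ℝ^d be centrally symmetric convex bodies of equal volume satisfying vol(t₁·C + t₂·B) ≤ c^d (t₁ + t₂)^d vol(B) for all t₁, t₂ > 0 with c ≥ 1. Then |B ∩ ℤ^d| ≤ (3c)^d · |C ∩ ℤ^d| and |C ∩ ℤ^d| ≤ (3c)^d · |B ∩ ℤ^d|. -/

import Mathlib

/-!
Choose a maximal set `T ⊆ B ∩ ℤ^d` whose translates `t + ½C` are pairwise disjoint. These
translates lie in `B + ½C`, so `|T| 2⁻ᵈ vol C ≤ vol (½C + B) ≤ (3c/2)ᵈ vol C`, i.e. `|T| ≤ (3c)ᵈ`.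
By maximality every lattice point of `B` lies in some `t + (½C - ½C) = t + C` with `t ∈ T`, and
each such translate contains exactly `|C ∩ ℤ^d|` lattice points. Exchanging `B` and `C` gives
the other inequality.
-/

open MeasureTheory
open scoped Pointwise ENNReal

/-- The integer lattice points in `ℝ^d`. -/
def intLattice (d : ℕ) : Set (EuclideanSpace ℝ (Fin d)) :=
  {x | ∀ i, ∃ n : ℤ, x i = n}

open scoped Finset

namespace Finset

variable {G : Type*} [AddGroup G] [MeasurableSpace G] [MeasurableAdd G]

theorem ruzsa_covering_add_of_measure (μ : Measure G) [μ.IsAddLeftInvariant]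
    (A : Finset G) {K : Set G} (hK : MeasurableSet K) (hK₀ : K.Nonempty) :
    ∃ F ⊆ A, #F * μ K ≤ μ (A + K) ∧ (A : Set G) ⊆ F + (K - K) := by
  classical
  set 𝒞 := A.powerset.filter fun F : Finset G ↦ (F : Set G).PairwiseDisjoint (· +ᵥ K)
  obtain ⟨F, hFmax⟩ := 𝒞.exists_maximal ⟨∅, by simp [𝒞]⟩
  simp only [𝒞, mem_filter, mem_powerset] at hFmax
  obtain ⟨hFA, hF⟩ := hFmax.1
  refine ⟨F, hFA, ?_, fun a ha ↦ ?_⟩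
  · calc (#F : ℝ≥0∞) * μ K = ∑ a ∈ F, μ (a +ᵥ K) := by simp
      _ = μ (⋃ a ∈ F, a +ᵥ K) := (measure_biUnion_finset hF fun a _ ↦ hK.const_vadd a).symm
      _ ≤ μ (A + K) := by
        gcongr
        exact Set.iUnion₂_subset fun a ha ↦ Set.vadd_set_subset_add (hFA ha)
  by_cases hau : a ∈ F
  · obtain ⟨k, hk⟩ := hK₀
    exact ⟨a, hau, k - k, Set.sub_mem_sub hk hk, by simp⟩
  by_cases! H : ∀ b ∈ F, Disjoint (a +ᵥ K) (b +ᵥ K)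
  · refine (hFmax.not_gt ?_ <| ssubset_insert hau).elim
    rw [insert_subset_iff, coe_insert]
    exact ⟨⟨ha, hFA⟩, hF.insert fun _ hb _ ↦ H _ hb⟩
  obtain ⟨b, hb, hab⟩ := H
  obtain ⟨x, ⟨k, hk, rfl⟩, ⟨k', hk', hx⟩⟩ := Set.not_disjoint_iff.1 hab
  refine ⟨b, hb, k' - k, Set.sub_mem_sub hk' hk, ?_⟩
  simp only [vadd_eq_add] at hx
  show b + (k' - k) = a
  rw [sub_eq_add_neg, ← add_assoc, hx, add_neg_cancel_right]

end Finset

namespace AddSubgroup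

variable {G : Type*} [AddGroup G]

theorem ncard_inter_le_card_mul_of_subset_add (L : AddSubgroup G) {S C : Set G} {F : Finset G}
    (hF : (F : Set G) ⊆ L) (hC : (C ∩ L).Finite) (hS : S ⊆ F + C) :
    (S ∩ L).ncard ≤ #F * (C ∩ L).ncard := by
  have hsub : S ∩ L ⊆ F + (C ∩ L) := by
    rintro x ⟨hxS, hxL⟩
    obtain ⟨f, hf, c, hc, rfl⟩ := hS hxS
    have hcL : c ∈ L := by simpa using L.add_mem (L.neg_mem (hF hf)) hxL
    exact Set.add_mem_add hf ⟨hc, hcL⟩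
  calc (S ∩ L).ncard ≤ (F + (C ∩ L) : Set G).ncard :=
        Set.ncard_le_ncard hsub (F.finite_toSet.add hC)
    _ ≤ (F : Set G).ncard * (C ∩ L).ncard := by
        simpa only [Nat.card_coe_set_eq] using Set.natCard_add_le
    _ = #F * (C ∩ L).ncard := by rw [Set.ncard_coe_finset]

theorem ncard_inter_mul_measure_le [MeasurableSpace G] [MeasurableAdd G] (μ : Measure G)
    [μ.IsAddLeftInvariant] (L : AddSubgroup G) {B K : Set G} (hB : (B ∩ L).Finite)
    (hKK : ((K - K) ∩ L).Finite) (hK : MeasurableSet K) (hK₀ : K.Nonempty) :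
    (B ∩ L).ncard * μ K ≤ μ (B + K) * ((K - K) ∩ L).ncard := by
  obtain ⟨F, hFA, hFμ, hAF⟩ := hB.toFinset.ruzsa_covering_add_of_measure μ hK hK₀
  rw [hB.coe_toFinset] at hAF
  have hFL : (F : Set G) ⊆ L := fun x hx ↦ (hB.mem_toFinset.1 (hFA hx)).2
  have hcount : (B ∩ L).ncard ≤ #F * ((K - K) ∩ L).ncard := by
    simpa [Set.inter_assoc] using L.ncard_inter_le_card_mul_of_subset_add hFL hKK hAF
  calc ((B ∩ L).ncard : ℝ≥0∞) * μ K ≤ (#F * ((K - K) ∩ L).ncard : ℕ) * μ K := by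
        gcongr
    _ = #F * μ K * ((K - K) ∩ L).ncard := by push_cast; ring
    _ ≤ μ (B + K) * ((K - K) ∩ L).ncard := by
        gcongr
        refine hFμ.trans (measure_mono (Set.add_subset_add_right ?_))
        simp [Set.inter_subset_left]

end AddSubgroup

theorem Convex.half_smul_sub_half_smul {E : Type*} [AddCommGroup E] [Module ℝ E] {C : Set E}
    (hconv : Convex ℝ C) (hsymm : C = -C) : (2⁻¹ : ℝ) • C - (2⁻¹ : ℝ) • C = C := by
  rw [sub_eq_add_neg, ← Set.smul_set_neg, ← hsymm, hconv.add_half_self_eq_self]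

theorem ZSpan.ncard_inter_le_of_measure_half_add_le {E ι : Type*} [NormedAddCommGroup E]
    [NormedSpace ℝ E] [FiniteDimensional ℝ E] [MeasurableSpace E] [BorelSpace E]
    (μ : Measure E) [μ.IsAddHaarMeasure] [Finite ι] (b : Module.Basis ι ℝ E) {B C : Set E}
    (hB : Bornology.IsBounded B) (hCcpt : IsCompact C) (hCconv : Convex ℝ C)
    (hCint : (interior C).Nonempty) (hCsymm : C = -C) {c : ℝ} (hc : 0 ≤ c)
    (hvol : μ ((2⁻¹ : ℝ) • C + B) ≤
      ENNReal.ofReal (c ^ Module.finrank ℝ E * (2⁻¹ + 1) ^ Module.finrank ℝ E) * μ C) :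
    ((B ∩ Submodule.span ℤ (Set.range b)).ncard : ℝ) ≤
      (3 * c) ^ Module.finrank ℝ E * (C ∩ Submodule.span ℤ (Set.range b)).ncard := by
  set n := Module.finrank ℝ E
  set L := (Submodule.span ℤ (Set.range b)).toAddSubgroup
  have key := L.ncard_inter_mul_measure_le μ (K := (2⁻¹ : ℝ) • C) (ZSpan.setFinite_inter b hB)
    (by rw [hCconv.half_smul_sub_half_smul hCsymm]; exact ZSpan.setFinite_inter b hCcpt.isBounded)
    (hCcpt.smul _).measurableSet ((hCint.mono interior_subset).smul_set)
  rw [hCconv.half_smul_sub_half_smul hCsymm, Measure.addHaar_smul, add_comm B,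
    abs_of_nonneg (by positivity)] at key
  have hscale : c ^ n * (2⁻¹ + 1) ^ n = (3 * c) ^ n * (2⁻¹ : ℝ) ^ n := by
    rw [← mul_pow, ← mul_pow]; ring_nf
  have hC0 : μ C ≠ 0 := (μ.measure_pos_of_nonempty_interior hCint).ne'
  have hCtop : μ C ≠ ∞ := hCcpt.measure_lt_top.ne
  have hhalf : ENNReal.ofReal ((2⁻¹ : ℝ) ^ n) ≠ 0 := by simp
  have hcount : ((B ∩ L).ncard : ℝ≥0∞) ≤ ENNReal.ofReal ((3 * c) ^ n) * (C ∩ L).ncard := by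
    rw [← ENNReal.mul_le_mul_iff_left (mul_ne_zero hhalf hC0)
      (ENNReal.mul_ne_top ENNReal.ofReal_ne_top hCtop)]
    calc ((B ∩ L).ncard : ℝ≥0∞) * (ENNReal.ofReal ((2⁻¹ : ℝ) ^ n) * μ C)
        ≤ μ ((2⁻¹ : ℝ) • C + B) * (C ∩ L).ncard := key
      _ ≤ ENNReal.ofReal (c ^ n * (2⁻¹ + 1) ^ n) * μ C * (C ∩ L).ncard := by gcongr
      _ = _ := by rw [hscale, ENNReal.ofReal_mul (by positivity)]; ring
  rw [← ENNReal.ofReal_natCast, ← ENNReal.ofReal_natCast (C ∩ L).ncard,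
    ← ENNReal.ofReal_mul (by positivity), ENNReal.ofReal_le_ofReal_iff (by positivity)] at hcount
  exact hcount

theorem intLattice_eq_span (d : ℕ) :
    intLattice d = Submodule.span ℤ (Set.range (EuclideanSpace.basisFun (Fin d) ℝ).toBasis) := by
  ext x
  rw [SetLike.mem_coe, Module.Basis.mem_span_iff_repr_mem]
  simp [intLattice, eq_comm]

theorem stmt_5 (d : ℕ) (B C : Set (EuclideanSpace ℝ (Fin d)))
    (hCcpt : IsCompact C) (hCconv : Convex ℝ C) (hCint : (interior C).Nonempty)
    (hCsymm : C = -C)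
    (hBcpt : IsCompact B) (hBconv : Convex ℝ B) (hBint : (interior B).Nonempty)
    (hBsymm : B = -B)
    (hvolEq : volume C = volume B)
    (c : ℝ) (hc : 1 ≤ c)
    (hvol : ∀ t₁ t₂ : ℝ, 0 < t₁ → 0 < t₂ →
      volume (t₁ • C + t₂ • B) ≤ ENNReal.ofReal (c ^ d * (t₁ + t₂) ^ d) * volume B) :
    ((B ∩ intLattice d).ncard : ℝ) ≤ (3 * c) ^ d * (C ∩ intLattice d).ncard ∧
    ((C ∩ intLattice d).ncard : ℝ) ≤ (3 * c) ^ d * (B ∩ intLattice d).ncard := by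
  have hc0 : 0 ≤ c := zero_le_one.trans hc
  have hdim : Module.finrank ℝ (EuclideanSpace ℝ (Fin d)) = d := finrank_euclideanSpace_fin
  rw [intLattice_eq_span]
  constructor
  · have h := hvol 2⁻¹ 1 (by norm_num) one_pos
    rw [one_smul, ← hvolEq] at h
    simpa only [hdim] using ZSpan.ncard_inter_le_of_measure_half_add_le volume _
      hBcpt.isBounded hCcpt hCconv hCint hCsymm hc0 (by simpa only [hdim] using h)
  · have h := hvol 1 2⁻¹ one_pos (by norm_num)
    rw [one_smul, add_comm C, add_comm 1] at h
    simpa only [hdim] using ZSpan.ncard_inter_le_of_measure_half_add_le volume _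
      hCcpt.isBounded hBcpt hBconv hBint hBsymm hc0 (by simpa only [hdim] using h)
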